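/- With the same notation, for all i ∈ {5,6,7,8}: ∂ᵢ α_{i−4} = ∂_{i−4} αᵢ − 2 Σ_{k=1}^4 ∂ₖ α_{k+4}. Moreover Σ_{k=1}^4 ∂ₖ α_{k+4} = ∂₅∂₆∂₇∂₈ C_{∂a}. -/

import Mathlib

set_option linter.unusedSectionVars false


open scoped TensorProduct
open MvPolynomial

set_option synthInstance.maxHeartbeats 1000000
set_option maxHeartbeats 1000000

noncomputable section

variable (F : Type) [Field F] [CharZero F]

/-- The polynomial part `F[∂₁,…,∂₄]` (even variables). -/
abbrev PolyPart := MvPolynomial (Fin 4) F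

/-- The exterior (Grassmann) part `Λ(∂₅,…,∂₈)` on four odd generators. -/
abbrev ExtPart := ExteriorAlgebra F (Fin 4 → F)

/-- `A = F[∂₁,…,∂₄] ⊗ Λ(∂₅,…,∂₈)` (written with the exterior factor first). -/
abbrev AA := ExtPart F ⊗[F] PolyPart F

/-- The `i`-th odd generator of the exterior part. -/
def gen (i : Fin 4) : ExtPart F := ExteriorAlgebra.ι F (Pi.single i (1 : F))

/-- The generators `∂₁,…,∂₈` of `A` (0-based: `dv 0,…,dv 3` are the even
generators `∂₁,…,∂₄`, and `dv 4,…,dv 7` are the odd generators `∂₅,…,∂₈`). -/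
def dv (i : Fin 8) : AA F :=
  if h : (i : ℕ) < 4 then (1 : ExtPart F) ⊗ₜ[F] (X ⟨i, h⟩ : PolyPart F)
  else (gen F ⟨(i : ℕ) - 4, by omega⟩) ⊗ₜ[F] (1 : PolyPart F)

/-- The elements `ν₁,…,ν₄` (0-based: `nu 0 = ν₁ = ∂₆∂₇∂₈`, etc.). -/
def nu : Fin 4 → AA F
  | 0 => dv F 5 * dv F 6 * dv F 7
  | 1 => -(dv F 4 * dv F 6 * dv F 7)
  | 2 => dv F 4 * dv F 5 * dv F 7
  | 3 => -(dv F 4 * dv F 5 * dv F 6)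

/-- `ν` extended to all eight indices by `ν₅ = ⋯ = ν₈ = 0`. -/
def nu8 (i : Fin 8) : AA F :=
  if h : (i : ℕ) < 4 then nu F ⟨i, h⟩ else 0

/-- the embedding `{1,…,4} → {1,…,8}` , `i ↦ i` (even indices). -/
def ei (i : Fin 4) : Fin 8 := ⟨(i : ℕ), by omega⟩
/-- the embedding `{1,…,4} → {1,…,8}` , `i ↦ i + 4` (odd indices). -/
def oi (i : Fin 4) : Fin 8 := ⟨(i : ℕ) + 4, by omega⟩

/-- The free `A`-module `R = A ⊗ F⁸` on the basis `a₁,…,a₈`, realized as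
`Fin 8 → A` with basis the coordinate vectors. -/
abbrev MM := Fin 8 → AA F

/-- The basis elements `a₁,…,a₈` (0-based). -/
def av (i : Fin 8) : MM F := Pi.single i (1 : AA F)

/-- `B_{∂∂} = Σ_{i=1}^4 ∂ᵢ∂_{i+4}`. -/
def Bdd : AA F := ∑ i : Fin 4, dv F (ei i) * dv F (oi i)

/-- `C_{∂a} = Σ_{i=1}^4 (∂ᵢ a_{i+4} + ∂_{i+4} aᵢ)`. -/
def Cda : MM F := ∑ i : Fin 4, (dv F (ei i) • av F (oi i) + dv F (oi i) • av F (ei i))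

/-- `B_{νa} = Σ_{i=1}^4 νᵢ a_{i+4}`. -/
def Bnua : MM F := ∑ i : Fin 4, nu F i • av F (oi i)

/-- `αᵢ = ∂ᵢ B_{∂∂} C_{∂a} − 2 νᵢ C_{∂a} + ∂ᵢ B_{νa}` for `i = 1,…,8` (0-based). -/
def alph (i : Fin 8) : MM F :=
  (dv F i * Bdd F) • Cda F - (2 : ℤ) • (nu8 F i • Cda F) + dv F i • Bnua F

end

section Aux

variable (F : Type) [Field F] [CharZero F]

lemma dv_even (i : Fin 8) (h : (i : ℕ) < 4) :
    dv F i = (1 : ExtPart F) ⊗ₜ[F] (X ⟨i, h⟩ : PolyPart F) := by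
  simp [dv, h]

lemma dv_odd (i : Fin 8) (h : ¬ (i : ℕ) < 4) :
    dv F i = (gen F ⟨(i : ℕ) - 4, by omega⟩) ⊗ₜ[F] (1 : PolyPart F) := by
  simp [dv, h]

lemma ecomm (i : Fin 8) (h : (i : ℕ) < 4) (x : AA F) :
    x * dv F i = dv F i * x := by
  rw [dv_even F i h]
  induction x using TensorProduct.induction_on with
  | zero => simp
  | tmul a p =>
      rw [Algebra.TensorProduct.tmul_mul_tmul, Algebra.TensorProduct.tmul_mul_tmul,
        mul_one, one_mul, mul_comm]
  | add a b ha hb => rw [add_mul, mul_add, ha, hb]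

lemma gen_swap (a b : Fin 4) : gen F a * gen F b = -(gen F b * gen F a) :=
  eq_neg_of_add_eq_zero_left (ExteriorAlgebra.ι_add_mul_swap _ _)

lemma gen_sq (a : Fin 4) : gen F a * gen F a = 0 :=
  ExteriorAlgebra.ι_sq_zero _

lemma oswap (i j : Fin 8) (hi : ¬ (i : ℕ) < 4) (hj : ¬ (j : ℕ) < 4) :
    dv F i * dv F j = -(dv F j * dv F i) := by
  rw [dv_odd F i hi, dv_odd F j hj, Algebra.TensorProduct.tmul_mul_tmul,
    Algebra.TensorProduct.tmul_mul_tmul, gen_swap, TensorProduct.neg_tmul]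

lemma osq (i : Fin 8) (hi : ¬ (i : ℕ) < 4) : dv F i * dv F i = 0 := by
  rw [dv_odd F i hi, Algebra.TensorProduct.tmul_mul_tmul, gen_sq, TensorProduct.zero_tmul]

end Aux

section Aux2
set_option linter.unusedSectionVars false
variable (F : Type) [Field F] [CharZero F]

lemma negmul (a b : AA F) : -a * b = -(a*b) := neg_mul a b
lemma mulneg (a b : AA F) : a * -b = -(a*b) := mul_neg a b

lemma sortsw (i j : Fin 8) (x : AA F) (hj : 3 < (j : ℕ)) (hij : (j : ℕ) < (i : ℕ)) :
    dv F i * (dv F j * x) = -(dv F j * (dv F i * x)) := by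
  rw [← mul_assoc, oswap F i j (by omega) (by omega), negmul, mul_assoc]

lemma sortsw2 (i j : Fin 8) (hj : 3 < (j : ℕ)) (hij : (j : ℕ) < (i : ℕ)) :
    dv F i * dv F j = -(dv F j * dv F i) :=
  oswap F i j (by omega) (by omega)

lemma sortsq (i : Fin 8) (x : AA F) (hi : 3 < (i : ℕ)) :
    dv F i * (dv F i * x) = 0 := by
  rw [← mul_assoc, osq F i (by omega), zero_mul]

lemma sortsq2 (i : Fin 8) (hi : 3 < (i : ℕ)) : dv F i * dv F i = 0 :=
  osq F i (by omega)

lemma sortev (i j : Fin 8) (x : AA F) (hi : (i : ℕ) < 4) (hj : 3 < (j : ℕ)) :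
    dv F j * (dv F i * x) = dv F i * (dv F j * x) := by
  rw [← mul_assoc, ecomm F i hi (dv F j), mul_assoc]

lemma sortev2 (i j : Fin 8) (hi : (i : ℕ) < 4) (hj : 3 < (j : ℕ)) :
    dv F j * dv F i = dv F i * dv F j :=
  ecomm F i hi (dv F j)

lemma sortee (i j : Fin 8) (x : AA F) (hi : (j : ℕ) < 4) (hij : (j : ℕ) < (i : ℕ)) :
    dv F i * (dv F j * x) = dv F j * (dv F i * x) := by
  rw [← mul_assoc, ecomm F j hi (dv F i), mul_assoc]

lemma sortee2 (i j : Fin 8) (hi : (j : ℕ) < 4) (hij : (j : ℕ) < (i : ℕ)) :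
    dv F i * dv F j = dv F j * dv F i :=
  ecomm F j hi (dv F i)

@[simp] lemma fmk0 (h : 0 < 4) : (⟨0, h⟩ : Fin 4) = 0 := rfl
@[simp] lemma fmk1 (h : 1 < 4) : (⟨1, h⟩ : Fin 4) = 1 := rfl
@[simp] lemma fmk2 (h : 2 < 4) : (⟨2, h⟩ : Fin 4) = 2 := rfl
@[simp] lemma fmk3 (h : 3 < 4) : (⟨3, h⟩ : Fin 4) = 3 := rfl

@[simp] lemma ei0 : ei 0 = 0 := rfl
@[simp] lemma ei1 : ei 1 = 1 := rfl
@[simp] lemma ei2 : ei 2 = 2 := rfl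
@[simp] lemma ei3 : ei 3 = 3 := rfl
@[simp] lemma oi0 : oi 0 = 4 := rfl
@[simp] lemma oi1 : oi 1 = 5 := rfl
@[simp] lemma oi2 : oi 2 = 6 := rfl
@[simp] lemma oi3 : oi 3 = 7 := rfl

lemma Bdd_sq : Bdd F * Bdd F = 0 := by
  simp only [Bdd, Fin.sum_univ_four, ei0, ei1, ei2, ei3, oi0, oi1, oi2, oi3]
  simp (disch := decide) only [add_mul, mul_add, mul_assoc, negmul, mulneg, neg_neg,
    sortsw, sortsw2, sortsq, sortsq2, sortev, sortev2, sortee, sortee2,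
    mul_zero, zero_mul, neg_zero]
  abel

lemma o_nu (k : Fin 4) :
    dv F (oi k) * nu F k = dv F 4 * dv F 5 * dv F 6 * dv F 7 := by
  fin_cases k <;>
  simp (disch := decide) only [fmk0, fmk1, fmk2, fmk3, nu, oi0, oi1, oi2, oi3, Fin.isValue, mul_assoc, negmul, mulneg,
    neg_neg, sortsw, sortsw2, sortsq, sortsq2, sortev, sortev2, sortee, sortee2,
    mul_zero, zero_mul, neg_zero]

lemma Bdd_nu (k : Fin 4) :
    Bdd F * nu F k = (dv F 4 * dv F 5 * dv F 6 * dv F 7) * dv F (ei k) := by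
  fin_cases k <;>
  · simp only [fmk0, fmk1, fmk2, fmk3, Bdd, Fin.sum_univ_four, ei0, ei1, ei2, ei3, oi0, oi1, oi2, oi3, Fin.isValue]
    simp (disch := decide) only [nu, Fin.isValue, add_mul, mul_add, mul_assoc, negmul, mulneg,
      neg_neg, sortsw, sortsw2, sortsq, sortsq2, sortev, sortev2, sortee, sortee2,
      mul_zero, zero_mul, neg_zero, add_zero, zero_add]

lemma P_o (k : Fin 4) :
    (dv F 4 * dv F 5 * dv F 6 * dv F 7) * dv F (oi k) = 0 := by
  fin_cases k <;>
  simp (disch := decide) only [fmk0, fmk1, fmk2, fmk3, oi0, oi1, oi2, oi3, Fin.isValue, mul_assoc, negmul, mulneg,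
    neg_neg, sortsw, sortsw2, sortsq, sortsq2, sortev, sortev2, sortee, sortee2,
    mul_zero, zero_mul, neg_zero]

lemma nu8_oi (k : Fin 4) : nu8 F (oi k) = 0 := by
  simp [nu8, oi]

lemma nu8_ei (k : Fin 4) : nu8 F (ei k) = nu F k := by
  simp [nu8, ei]

end Aux2

section Main
set_option linter.unusedSectionVars false
variable (F : Type) [Field F] [CharZero F]

lemma smulsmul (a b : AA F) (x : MM F) : a • b • x = (a * b) • x := smul_smul a b x
lemma smuladd (a : AA F) (x y : MM F) : a • (x + y) = a • x + a • y := smul_add a x y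
lemma smulsub (a : AA F) (x y : MM F) : a • (x - y) = a • x - a • y := smul_sub a x y
lemma sumsmul (f : Fin 4 → AA F) (x : MM F) :
    ∑ k : Fin 4, f k • x = (∑ k : Fin 4, f k) • x :=
  (Finset.sum_smul (s := Finset.univ) (f := f) (x := x)).symm
lemma smulsum (a : AA F) (f : Fin 4 → MM F) :
    a • ∑ k : Fin 4, f k = ∑ k : Fin 4, a • f k :=
  Finset.smul_sum
lemma summul (f : Fin 4 → AA F) (a : AA F) :
    ∑ k : Fin 4, f k * a = (∑ k : Fin 4, f k) * a :=
  (Finset.sum_mul _ _ _).symm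

lemma hstep (k : Fin 4) : dv F (ei k) • alph F (oi k)
    = ((dv F (ei k) * dv F (oi k)) * Bdd F) • Cda F
      + (dv F (ei k) * dv F (oi k)) • Bnua F := by
  rw [alph, nu8_oi, zero_smul (AA F) (Cda F), smul_zero, sub_zero, smuladd, smulsmul, smulsmul,
    ← mul_assoc]

lemma claim2 : ∑ k : Fin 4, dv F (ei k) • alph F (oi k)
    = (dv F 4 * dv F 5 * dv F 6 * dv F 7) • Cda F := by
  simp only [hstep]
  rw [Finset.sum_add_distrib, sumsmul, sumsmul, summul, ← Bdd, Bdd_sq,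
    zero_smul (AA F) (Cda F), zero_add, Bnua, Cda, smulsum, smulsum]
  refine Finset.sum_congr rfl fun k _ => ?_
  rw [smulsmul, Bdd_nu, smuladd, smulsmul, smulsmul, P_o, zero_smul (AA F) (av F (ei k)), add_zero]

end Main

/-- For `i ∈ {5,6,7,8}`:
`∂ᵢ α_{i−4} = ∂_{i−4} αᵢ − 2 Σ_{k=1}^4 ∂ₖ α_{k+4}`, and moreover
`Σ_{k=1}^4 ∂ₖ α_{k+4} = ∂₅∂₆∂₇∂₈ C_{∂a}`. -/
theorem stmt4 (F : Type) [Field F] [CharZero F] :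
    (∀ i : Fin 4,
      dv F (oi i) • alph F (ei i) =
        dv F (ei i) • alph F (oi i)
          - (2 : ℤ) • ∑ k : Fin 4, dv F (ei k) • alph F (oi k)) ∧
    (∑ k : Fin 4, dv F (ei k) • alph F (oi k)
        = (dv F 4 * dv F 5 * dv F 6 * dv F 7) • Cda F) := by
  refine ⟨fun i => ?_, claim2 F⟩
  rw [claim2 F, alph, alph, nu8_ei, nu8_oi, zero_smul (AA F) (Cda F), smul_zero, sub_zero]
  have hlt : ((ei i : Fin 8) : ℕ) < 4 := i.isLt
  have hc : dv F (oi i) * (dv F (ei i) * Bdd F) = dv F (ei i) * (dv F (oi i) * Bdd F) := by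
    rw [← mul_assoc, ecomm F (ei i) hlt (dv F (oi i)), mul_assoc]
  simp only [two_smul, smuladd, smulsub, smulsmul]
  rw [hc, o_nu, ecomm F (ei i) hlt (dv F (oi i))]
  abel
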